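/- In the multinomial allocation model with q_1 ≤ 1/4, define R_0(n,r) by E[q̂_r] = E[p_r(ξ)] + R_0(n,r)/n, where p_r(x) = x^r e^{-x}/r!, ξ = n q_X with X uniform on {1,...,N}, and q̂_r = N̂_r/N. Then for 0 ≤ r ≤ n and n ≥ 1: -(β^r/r!)(r² + 2) ≤ R_0(n,r) ≤ (r/r!)(2β)^r, where β = n q_1 and q_1 = max_k q_k. -/

import Mathlib

/-!
By linearity, `E[q̂_r]` is the average over the boxes of the binomial weights
`b_k = C(n,r) q_k^r (1 - q_k)^(n-r)`, so `R₀ = n · avg_k (b_k - p_r(n q_k))` and it suffices to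
compare a single binomial weight with its Poisson approximation. With `x = n q`,
`b = x^r/r! · A · B` where `A = n(n-1)⋯(n-r+1)/n^r ∈ [1 - r²/n, 1]` and `B = (1 - q)^(n-r)`
satisfies `e^{-x} (1 - x q) ≤ B ≤ e^{-x} e^{q r}`. Together with `x^k e^{-x} ≤ k!` and
`e^q ≤ 2` (as `q ≤ 1/4 < log 2`) this bounds `b - p_r(x)` by `O(1/n)` from both sides, and
`x ≤ β` makes the bounds uniform over the boxes.
-/

/-- Expectation under the multinomial allocation model: `n` balls land independently,
ball landing in box `k` with probability `q k`. -/
noncomputable def allocExp (N n : ℕ) (q : Fin N → ℝ) (f : (Fin n → Fin N) → ℝ) : ℝ :=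
  ∑ ω : Fin n → Fin N, (∏ i, q (ω i)) * f ω

/-- Number of balls in box `k` under allocation `ω`. -/
def boxLoad {N n : ℕ} (ω : Fin n → Fin N) (k : Fin N) : ℕ :=
  (Finset.univ.filter fun i => ω i = k).card

/-- Number of boxes containing exactly `r` balls. -/
def NhatBoxes {N n : ℕ} (ω : Fin n → Fin N) (r : ℕ) : ℕ :=
  (Finset.univ.filter fun k => boxLoad ω k = r).card

/-- Poisson weight `p_r(x) = x^r e^{-x}/r!`. -/
noncomputable def poissonP (r : ℕ) (x : ℝ) : ℝ := x ^ r * Real.exp (-x) / r.factorial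

open Finset Real

section Marginal

variable {ι α : Type*} [Fintype ι] [DecidableEq ι] [Fintype α] [DecidableEq α]

lemma sum_prod_mul_ite_preimage_eq (q : α → ℝ) (hq : ∑ a, q a = 1) (k : α) (S : Finset ι) :
    ∑ ω : ι → α, (∏ i, q (ω i)) * (if univ.filter (fun i => ω i = k) = S then 1 else 0) =
      q k ^ #S * (1 - q k) ^ (Fintype.card ι - #S) := by
  have hfactor : ∀ ω : ι → α,
      (∏ i, q (ω i)) * (if univ.filter (fun i => ω i = k) = S then 1 else 0) =
        ∏ i, q (ω i) * (if (ω i = k ↔ i ∈ S) then 1 else 0) := by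
    intro ω
    simp only [prod_mul_distrib, prod_boole, mem_univ, true_implies, Finset.ext_iff,
      mem_filter, true_and]
  have hcoord : ∀ i, ∑ a, q a * (if (a = k ↔ i ∈ S) then 1 else 0) =
      if i ∈ S then q k else 1 - q k := by
    intro i
    by_cases hi : i ∈ S
    · simp [hi]
    · simp only [hi, iff_false, if_false, mul_ite, mul_zero, mul_one]
      rw [← hq, ← sum_erase_eq_sub (mem_univ k), sum_ite, sum_const_zero, add_zero, filter_ne']
  rw [Fintype.sum_congr _ _ hfactor, ← Fintype.prod_sum (κ := fun _ => α)
      fun i a => q a * (if (a = k ↔ i ∈ S) then 1 else 0),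
    Fintype.prod_congr _ _ hcoord, prod_ite, prod_const, prod_const, filter_mem_eq_inter,
    univ_inter, filter_notMem_eq_sdiff, card_univ_sdiff]

end Marginal

noncomputable def binomialP (n r : ℕ) (q : ℝ) : ℝ := n.choose r * q ^ r * (1 - q) ^ (n - r)

section Allocation

variable {N n : ℕ} (q : Fin N → ℝ)

lemma allocExp_div (f : (Fin n → Fin N) → ℝ) (c : ℝ) :
    allocExp N n q (fun ω => f ω / c) = allocExp N n q f / c := by
  simp only [allocExp, sum_div, mul_div_assoc]

lemma allocExp_ite_boxLoad_eq (hq : ∑ k, q k = 1) (k : Fin N) (r : ℕ) :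
    allocExp N n q (fun ω => if boxLoad ω k = r then 1 else 0) = binomialP n r (q k) := by
  have hsplit : ∀ ω : Fin n → Fin N, (if boxLoad ω k = r then (1 : ℝ) else 0) =
      ∑ S ∈ powersetCard r univ, if univ.filter (fun i => ω i = k) = S then 1 else 0 := by
    intro ω
    rw [sum_ite_eq]
    exact if_congr (by simp [mem_powersetCard, boxLoad]) rfl rfl
  simp only [allocExp, hsplit, mul_sum]
  rw [sum_comm, sum_congr rfl fun S hS => by
    rw [sum_prod_mul_ite_preimage_eq q hq k S, (mem_powersetCard.1 hS).2]]
  simp [binomialP, card_powersetCard]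
  ring

lemma allocExp_NhatBoxes (hq : ∑ k, q k = 1) (r : ℕ) :
    allocExp N n q (fun ω => (NhatBoxes ω r : ℝ)) = ∑ k, binomialP n r (q k) := by
  simp only [NhatBoxes, natCast_card_filter, ← allocExp_ite_boxLoad_eq q hq _ r]
  simp only [allocExp, mul_sum]
  exact sum_comm

end Allocation

lemma pow_mul_exp_neg_le_factorial {x : ℝ} (hx : 0 ≤ x) (k : ℕ) :
    x ^ k * exp (-x) ≤ k.factorial := by
  have h := pow_div_factorial_le_exp x hx k
  rw [div_le_iff₀ (by positivity)] at h
  rw [exp_neg, ← div_eq_mul_inv, div_le_iff₀ (exp_pos x)]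
  linarith

lemma exp_mul_le_two_pow {q : ℝ} (hq : q ≤ log 2) (r : ℕ) : exp (q * r) ≤ 2 ^ r := by
  have h2 : exp q ≤ 2 := (exp_le_exp.2 hq).trans_eq (exp_log two_pos)
  rw [mul_comm, exp_nat_mul]
  exact pow_le_pow_left₀ (exp_pos q).le h2 r

lemma exp_sub_one_le_mul_exp (x : ℝ) : exp x - 1 ≤ x * exp x := by
  have h := mul_le_mul_of_nonneg_right (one_sub_le_exp_neg x) (exp_pos x).le
  rw [← exp_add, neg_add_cancel, exp_zero] at h
  linarith

lemma one_sub_pow_sub_le_exp {q : ℝ} (hq : q ≤ 1) {n r : ℕ} (hr : r ≤ n) :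
    (1 - q) ^ (n - r) ≤ exp (-(n * q)) * exp (q * r) := by
  calc (1 - q) ^ (n - r) ≤ exp (-q) ^ (n - r) :=
        pow_le_pow_left₀ (by linarith) (one_sub_le_exp_neg q) _
    _ = exp (-(n * q)) * exp (q * r) := by
        rw [← exp_nat_mul, ← exp_add, Nat.cast_sub hr]
        ring_nf

/-- `e^{-q} (1 - q²) ≤ 1 - q` because `1 + q ≤ e^q`; Bernoulli then handles `(1 - q²)^n`. -/
lemma exp_neg_mul_le_one_sub_pow {q : ℝ} (hq0 : 0 ≤ q) (hq1 : q ≤ 1) (n : ℕ) :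
    exp (-(n * q)) * (1 - n * q ^ 2) ≤ (1 - q) ^ n := by
  have hbase : exp (-q) * (1 - q ^ 2) ≤ 1 - q := by
    have h := mul_le_mul_of_nonneg_left (add_one_le_exp q) (by linarith : 0 ≤ 1 - q)
    rw [exp_neg, ← div_eq_inv_mul, div_le_iff₀ (exp_pos q)]
    nlinarith
  have hbern : 1 - n * q ^ 2 ≤ (1 - q ^ 2) ^ n := by
    have := one_add_mul_le_pow (a := -q ^ 2) (by nlinarith) n
    simpa [sub_eq_add_neg] using this
  calc exp (-(n * q)) * (1 - n * q ^ 2) ≤ exp (-q) ^ n * (1 - q ^ 2) ^ n := by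
        rw [← exp_nat_mul, mul_neg]
        exact mul_le_mul_of_nonneg_left hbern (exp_pos _).le
    _ = (exp (-q) * (1 - q ^ 2)) ^ n := (mul_pow _ _ _).symm
    _ ≤ (1 - q) ^ n := pow_le_pow_left₀ (mul_nonneg (exp_pos _).le (by nlinarith)) hbase n

lemma one_sub_sq_div_le_descFactorial_div_pow {n r : ℕ} (hn : 0 < n) (hr : r ≤ n) :
    1 - (r : ℝ) ^ 2 / n ≤ n.descFactorial r / (n : ℝ) ^ r := by
  have hn' : (0 : ℝ) < n := by exact_mod_cast hn
  have hrn : (r : ℝ) ≤ n := by exact_mod_cast hr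
  have hbern : 1 + r * ((1 - r) / n) ≤ (1 + (1 - r) / n : ℝ) ^ r :=
    one_add_mul_le_pow (by rw [le_div_iff₀ hn']; nlinarith) r
  have hdesc : ((n + 1 - r : ℝ)) ^ r ≤ n.descFactorial r := by
    have := Nat.pow_sub_le_descFactorial n r
    rw [← Nat.cast_le (α := ℝ)] at this
    push_cast [Nat.cast_sub (by omega : r ≤ n + 1)] at this
    exact this
  calc 1 - (r : ℝ) ^ 2 / n ≤ 1 + r * ((1 - r) / n) := by
        have : (r : ℝ) * ((1 - r) / n) = r / n - r ^ 2 / n := by ring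
        linarith [show (0 : ℝ) ≤ r / n by positivity]
    _ ≤ (1 + (1 - r) / n : ℝ) ^ r := hbern
    _ = (n + 1 - r : ℝ) ^ r / (n : ℝ) ^ r := by
        rw [← div_pow]
        congr 1
        field_simp
        ring
    _ ≤ n.descFactorial r / (n : ℝ) ^ r := by gcongr

section Comparison

variable {n r : ℕ} {q : ℝ}

lemma binomialP_eq_mul (hn : n ≠ 0) : binomialP n r q =
    (n * q) ^ r / r.factorial * (n.descFactorial r / (n : ℝ) ^ r * (1 - q) ^ (n - r)) := by
  rw [binomialP, Nat.descFactorial_eq_factorial_mul_choose]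
  field_simp
  push_cast
  ring

lemma poissonP_eq_mul (x : ℝ) : poissonP r x = x ^ r / r.factorial * exp (-x) := by
  rw [poissonP]
  ring

lemma binomialP_sub_poissonP_le (hn : 0 < n) (hr : r ≤ n) (hq0 : 0 ≤ q) (hq : q ≤ 1 / 4) :
    binomialP n r q - poissonP r (n * q) ≤ (n * q) ^ r / r.factorial * (r * 2 ^ r / n) := by
  rw [binomialP_eq_mul hn.ne', poissonP_eq_mul, ← mul_sub]
  refine mul_le_mul_of_nonneg_left ?_ (by positivity)
  set E := exp (-(n * q))
  set A : ℝ := n.descFactorial r / (n : ℝ) ^ r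
  set B := (1 - q) ^ (n - r)
  have hxE : n * q * E ≤ 1 := by
    simpa using pow_mul_exp_neg_le_factorial (x := n * q) (by positivity) 1
  have hA : A ≤ 1 :=
    div_le_one_of_le₀ (by exact_mod_cast Nat.descFactorial_le_pow n r) (by positivity)
  have hB : B ≤ E * exp (q * r) := one_sub_pow_sub_le_exp (by linarith) hr
  have hB0 : 0 ≤ B := pow_nonneg (by linarith) _
  have hE0 : 0 ≤ E := (exp_pos _).le
  calc A * B - E ≤ E * (exp (q * r) - 1) := by nlinarith
    _ ≤ E * (q * r * exp (q * r)) := mul_le_mul_of_nonneg_left (exp_sub_one_le_mul_exp _) hE0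
    _ = n * q * E * exp (q * r) * (r / n) := by field_simp
    _ ≤ 1 * 2 ^ r * (r / n) := by gcongr; exact exp_mul_le_two_pow (by linarith [log_two_gt_d9]) r
    _ = r * 2 ^ r / n := by ring

lemma neg_le_binomialP_sub_poissonP (hn : 0 < n) (hr : r ≤ n) (hq0 : 0 ≤ q) (hq1 : q ≤ 1) :
    -((n * q) ^ r / r.factorial * ((r ^ 2 + 2) / n)) ≤ binomialP n r q - poissonP r (n * q) := by
  rw [binomialP_eq_mul hn.ne', poissonP_eq_mul, ← mul_sub, ← mul_neg]
  refine mul_le_mul_of_nonneg_left ?_ (by positivity)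
  set x := (n : ℝ) * q with hx
  set E := exp (-x)
  set A : ℝ := n.descFactorial r / (n : ℝ) ^ r
  set B := (1 - q) ^ (n - r)
  have hx0 : 0 ≤ x := by positivity
  have hE0 : 0 ≤ E := (exp_pos _).le
  have hE1 : E ≤ 1 := exp_le_one_iff.2 (by linarith)
  have hA0 : 0 ≤ A := by positivity
  have hA1 : A ≤ 1 :=
    div_le_one_of_le₀ (by exact_mod_cast Nat.descFactorial_le_pow n r) (by positivity)
  have hA : 1 - r ^ 2 / n ≤ A := one_sub_sq_div_le_descFactorial_div_pow hn hr
  have hB : E * (1 - x * q) ≤ B :=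
    calc E * (1 - x * q) = exp (-(n * q)) * (1 - n * q ^ 2) := by ring
      _ ≤ (1 - q) ^ n := exp_neg_mul_le_one_sub_pow hq0 hq1 n
      _ ≤ B := pow_le_pow_of_le_one (by linarith) (by linarith) (Nat.sub_le n r)
  have hx2E : x ^ 2 * E ≤ 2 := by simpa using pow_mul_exp_neg_le_factorial hx0 2
  have hshift : -(E * x * q) ≤ A * (B - E) := by
    rcases le_total E B with h | h
    · nlinarith [mul_nonneg hA0 (sub_nonneg.2 h), mul_nonneg (mul_nonneg hE0 hx0) hq0]
    · nlinarith [mul_nonneg (sub_nonneg.2 hA1) (sub_nonneg.2 h)]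
  have hfall : -(r ^ 2 / n) ≤ (A - 1) * E := by
    nlinarith [mul_nonneg (sub_nonneg.2 hA1) (sub_nonneg.2 hE1)]
  have hExq : E * x * q = x ^ 2 * E / n := by rw [hx]; field_simp
  have h2n : x ^ 2 * E / n ≤ 2 / n := by gcongr
  calc -(((r : ℝ) ^ 2 + 2) / n) = -(r ^ 2 / n) - 2 / n := by ring
    _ ≤ (A - 1) * E + A * (B - E) := by linarith
    _ = A * B - E := by ring

end Comparison

theorem stmt_16 (N n : ℕ) (hN : 0 < N) (hn : 1 ≤ n) (q : Fin N → ℝ)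
    (hq : ∀ k, 0 < q k) (hsum : ∑ k, q k = 1)
    (hmax : ∀ k, q k ≤ q ⟨0, hN⟩) (hq1 : q ⟨0, hN⟩ ≤ 1 / 4)
    (r : ℕ) (hr : r ≤ n)
    (β R₀ : ℝ) (hβ : β = (n : ℝ) * q ⟨0, hN⟩)
    (hR : allocExp N n q (fun ω => (NhatBoxes ω r : ℝ) / (N : ℝ)) =
      (1 / (N : ℝ)) * (∑ k, poissonP r ((n : ℝ) * q k)) + R₀ / (n : ℝ)) :
    -(β ^ r / (r.factorial : ℝ)) * ((r : ℝ) ^ 2 + 2) ≤ R₀ ∧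
      R₀ ≤ ((r : ℝ) / (r.factorial : ℝ)) * (2 * β) ^ r := by
  have hn' : (0 : ℝ) < n := by exact_mod_cast hn
  have hN' : (0 : ℝ) < N := by exact_mod_cast hN
  have hR₀ : R₀ = n / N * ∑ k, (binomialP n r (q k) - poissonP r (n * q k)) := by
    rw [allocExp_div, allocExp_NhatBoxes q hsum] at hR
    rw [sum_sub_distrib]
    field_simp at hR ⊢
    linarith
  have hpow : ∀ k, ((n : ℝ) * q k) ^ r ≤ β ^ r := fun k =>
    pow_le_pow_left₀ (mul_nonneg hn'.le (hq k).le)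
      (hβ ▸ mul_le_mul_of_nonneg_left (hmax k) hn'.le) r
  have hlow : ∀ k ∈ univ, -(β ^ r / r.factorial * ((r ^ 2 + 2) / n)) ≤
      binomialP n r (q k) - poissonP r (n * q k) := fun k _ =>
    (neg_le_binomialP_sub_poissonP hn hr (hq k).le (by linarith [hmax k])).trans'
      (by gcongr -(?_ / _ * _); exact hpow k)
  have hup : ∀ k ∈ univ, binomialP n r (q k) - poissonP r (n * q k) ≤
      β ^ r / r.factorial * (r * 2 ^ r / n) := fun k _ =>
    (binomialP_sub_poissonP_le hn hr (hq k).le ((hmax k).trans hq1)).trans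
      (by gcongr ?_ / _ * _; exact hpow k)
  have hsum_low := card_nsmul_le_sum univ _ _ hlow
  have hsum_up := sum_le_card_nsmul univ _ _ hup
  rw [card_univ, Fintype.card_fin, nsmul_eq_mul] at hsum_low hsum_up
  rw [hR₀]
  constructor
  · calc -(β ^ r / r.factorial) * ((r : ℝ) ^ 2 + 2)
          = n / N * (N * -(β ^ r / r.factorial * ((r ^ 2 + 2) / n))) := by field_simp
      _ ≤ _ := by gcongr
  · calc _ ≤ n / N * (N * (β ^ r / r.factorial * (r * 2 ^ r / n))) := by gcongr
      _ = r / r.factorial * (2 * β) ^ r := by field_simp; ring
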